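/- arXiv:2012.01252 — 3 statements merged into one kernel-verified Lean document; each statement's English description precedes it below -/
import Mathlib

section
/- The KL projection of a matrix γ with strictly positive entries onto the set C₁ = {T ∈ ℝ^{n×m}_{≥0} : T1 ≤ μ} (row sums bounded by a positive vector μ) is given by Diag(min(μ/(γ1), 1)) γ, where division and minimum are taken entrywise. -/
/-!
The objective and the constraints separate over rows, so it suffices to minimise
`∑ⱼ (tⱼ log (tⱼ / gⱼ) - tⱼ + gⱼ)` over `t ≥ 0` with `∑ⱼ tⱼ ≤ μ`. For `c > 0`, the nonnegativity of
`klFun` gives the entrywise bound `tⱼ log (tⱼ / gⱼ) - tⱼ ≥ tⱼ log c - c gⱼ`, whence the row objective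
is at least `(∑ⱼ tⱼ) log c + (1 - c) ∑ⱼ gⱼ`, with equality at `t = c g`. Taking
`c = min (μ / ∑ⱼ gⱼ) 1` this bound is at least its value at `t = c g`: either `log c = 0`, or
`log c ≤ 0` and `∑ⱼ tⱼ ≤ μ = c ∑ⱼ gⱼ`.
-/

open Finset

noncomputable def klDiv {n m : ℕ} (T S : Matrix (Fin n) (Fin m) ℝ) : ℝ :=
  ∑ i, ∑ j, (T i j * Real.log (T i j / S i j) - T i j + S i j)

open Real InformationTheory

lemma mul_log_sub_mul_le_mul_log_div_sub {t c g : ℝ} (ht : 0 ≤ t) (hc : 0 < c) (hg : 0 < g) :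
    t * log c - c * g ≤ t * log (t / g) - t := by
  have hlog : t * log (t / (c * g)) = t * log (t / g) - t * log c := by
    rcases ht.eq_or_lt with rfl | ht
    · simp
    · rw [mul_comm c g, ← div_div, log_div (by positivity) hc.ne', mul_sub]
  have hkl := mul_nonneg (mul_pos hc hg).le (klFun_nonneg (div_nonneg ht (mul_pos hc hg).le))
  rw [klFun_apply, mul_sub, mul_add, ← mul_assoc, mul_div_cancel₀ _ (mul_pos hc hg).ne',
    mul_one, hlog] at hkl
  linarith

lemma min_div_one_mul_le {a b : ℝ} (ha : 0 ≤ a) (hb : 0 ≤ b) : min (a / b) 1 * b ≤ a := by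
  rcases hb.eq_or_lt with rfl | hb
  · simpa using ha
  · calc min (a / b) 1 * b ≤ a / b * b := by gcongr; exact min_le_left _ _
      _ = a := div_mul_cancel₀ a hb.ne'

section Row

variable {ι : Type*} [Fintype ι] {g t : ι → ℝ}

lemma sum_const_mul_mul_log_div_sub_add (hg : ∀ j, g j ≠ 0) (c : ℝ) :
    ∑ j, (c * g j * log (c * g j / g j) - c * g j + g j) = (c * log c - c + 1) * ∑ j, g j := by
  rw [mul_sum]
  refine sum_congr rfl fun j _ => ?_
  rw [mul_div_assoc, div_self (hg j), mul_one]
  ring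

lemma sum_mul_log_add_le_sum_mul_log_div_sub_add {c : ℝ} (hc : 0 < c) (hg : ∀ j, 0 < g j)
    (ht : ∀ j, 0 ≤ t j) :
    (∑ j, t j) * log c + (1 - c) * ∑ j, g j ≤ ∑ j, (t j * log (t j / g j) - t j + g j) := by
  rw [sum_mul, mul_sum, ← sum_add_distrib]
  refine sum_le_sum fun j _ => ?_
  linarith [mul_log_sub_mul_le_mul_log_div_sub (ht j) hc (hg j)]

lemma sum_min_div_one_mul_log_le {μ : ℝ} (hμ : 0 < μ) (hg : ∀ j, 0 < g j) (ht : ∀ j, 0 ≤ t j)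
    (hsum : ∑ j, t j ≤ μ) :
    ∑ j, (min (μ / ∑ k, g k) 1 * g j * log (min (μ / ∑ k, g k) 1 * g j / g j)
        - min (μ / ∑ k, g k) 1 * g j + g j)
      ≤ ∑ j, (t j * log (t j / g j) - t j + g j) := by
  cases isEmpty_or_nonempty ι
  · simp
  set s := ∑ k, g k
  set c := min (μ / s) 1
  have hs : 0 < s := sum_pos (fun j _ => hg j) univ_nonempty
  have hc : 0 < c := lt_min (by positivity) one_pos
  have hlog : c * s * log c ≤ (∑ j, t j) * log c := by
    rcases le_or_gt 1 (μ / s) with h | h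
    · simp [c, min_eq_right h]
    · have hcs : c * s = μ := by rw [show c = μ / s from min_eq_left h.le, div_mul_cancel₀ μ hs.ne']
      exact mul_le_mul_of_nonpos_right (hcs ▸ hsum) (log_nonpos hc.le (min_le_right _ _))
  calc _ = (c * log c - c + 1) * s := sum_const_mul_mul_log_div_sub_add (fun j => (hg j).ne') c
    _ ≤ (∑ j, t j) * log c + (1 - c) * s := by linarith
    _ ≤ _ := sum_mul_log_add_le_sum_mul_log_div_sub_add hc hg ht

end Row

theorem stmt_1 {n m : ℕ} (γ : Matrix (Fin n) (Fin m) ℝ) (μ : Fin n → ℝ)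
    (hγ : ∀ i j, 0 < γ i j) (hμ : ∀ i, 0 < μ i) :
    let C₁ : Set (Matrix (Fin n) (Fin m) ℝ) :=
      {T | (∀ i j, 0 ≤ T i j) ∧ ∀ i, ∑ j, T i j ≤ μ i}
    let P : Matrix (Fin n) (Fin m) ℝ :=
      fun i j => min (μ i / ∑ k, γ i k) 1 * γ i j
    P ∈ C₁ ∧ ∀ T ∈ C₁, klDiv P γ ≤ klDiv T γ := by
  intro C₁ P
  have hrow_nonneg (i : Fin n) : 0 ≤ ∑ k, γ i k := sum_nonneg fun k _ => (hγ i k).le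
  refine ⟨⟨fun i j => ?_, fun i => ?_⟩, fun T ⟨hT, hTsum⟩ => ?_⟩
  · exact mul_nonneg (le_min (div_nonneg (hμ i).le (hrow_nonneg i)) zero_le_one) (hγ i j).le
  · rw [← mul_sum]
    exact min_div_one_mul_le (hμ i).le (hrow_nonneg i)
  · exact sum_le_sum fun i _ => sum_min_div_one_mul_log_le (hμ i) (hγ i) (hT i) (hTsum i)
end

section
/- The KL projection of a matrix γ with strictly positive entries onto the set C₂ = {T ∈ ℝ^{n×m}_{≥0} : Tᵀ1 ≤ ν} (column sums bounded by a positive vector ν) is γ Diag(min(ν/(γᵀ1), 1)), where division and minimum are entrywise. -/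
/-!
Both the generalized KL divergence and the constraint split over columns, so it suffices to
minimise `∑ᵢ (tᵢ log (tᵢ / gᵢ) - tᵢ + gᵢ)` over one column `t ≥ 0` with `∑ t ≤ ν`.
Comparing `t` entrywise with the rescaled column `α g` via `x - c ≤ x log (x / c)` gives the
tangent bound `KL(t, g) ≥ KL(α g, g) + (∑ t - α ∑ g) log α`. For `α = min (ν / ∑ g) 1` the
correction term is nonnegative: either `log α = 0`, or `α ∑ g = ν ≥ ∑ t` and `log α ≤ 0`.
-/

open Finset

open Real

noncomputable def klDivVec {ι : Type*} [Fintype ι] (t g : ι → ℝ) : ℝ :=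
  ∑ i, (t i * log (t i / g i) - t i + g i)

lemma klDiv_eq_sum_klDivVec {n m : ℕ} (T S : Matrix (Fin n) (Fin m) ℝ) :
    klDiv T S = ∑ j, klDivVec (fun i => T i j) (fun i => S i j) :=
  sum_comm

lemma sub_le_mul_log_div {x c : ℝ} (hx : 0 ≤ x) (hc : 0 < c) : x - c ≤ x * log (x / c) := by
  have hkl : c * InformationTheory.klFun (x / c) = x * log (x / c) + c - x := by
    rw [InformationTheory.klFun]
    field_simp
  linarith [mul_nonneg hc.le (InformationTheory.klFun_nonneg (div_nonneg hx hc.le))]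

lemma sub_add_mul_log_le_mul_log_div {t g α : ℝ} (ht : 0 ≤ t) (hg : 0 < g) (hα : 0 < α) :
    t - g * α + t * log α ≤ t * log (t / g) := by
  rcases ht.eq_or_lt with rfl | ht
  · simpa using (mul_pos hg hα).le
  · have h := sub_le_mul_log_div ht.le (mul_pos hg hα)
    rw [← div_div, log_div (div_pos ht hg).ne' hα.ne', mul_sub] at h
    linarith

section Column

variable {ι : Type*} [Fintype ι] {t g : ι → ℝ}

lemma klDivVec_mul_const (hg : ∀ i, g i ≠ 0) (α : ℝ) :
    klDivVec (fun i => g i * α) g = (∑ i, g i) * (α * log α - α + 1) := by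
  simp only [klDivVec, mul_div_cancel_left₀ _ (hg _), sum_mul]
  exact sum_congr rfl fun i _ => by ring

lemma klDivVec_ge_tangent (ht : ∀ i, 0 ≤ t i) (hg : ∀ i, 0 < g i) {α : ℝ} (hα : 0 < α) :
    (∑ i, g i) * (α * log α - α + 1) + (∑ i, t i - α * ∑ i, g i) * log α ≤ klDivVec t g := by
  calc (∑ i, g i) * (α * log α - α + 1) + (∑ i, t i - α * ∑ i, g i) * log α
      = ∑ i, ((t i - g i * α + t i * log α) - t i + g i) := by
        simp only [sum_add_distrib, sum_sub_distrib, ← sum_mul]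
        ring
    _ ≤ klDivVec t g := sum_le_sum fun i _ => by
        linarith [sub_add_mul_log_le_mul_log_div (ht i) (hg i) hα]

lemma sum_mul_min_div_sum_le (hg : ∀ i, 0 ≤ g i) {ν : ℝ} (hν : 0 ≤ ν) :
    ∑ i, g i * min (ν / ∑ k, g k) 1 ≤ ν := by
  rw [← sum_mul]
  rcases (sum_nonneg fun i (_ : i ∈ univ) => hg i).eq_or_lt with h | h
  · rw [← h, zero_mul]
    exact hν
  · calc (∑ i, g i) * min (ν / ∑ k, g k) 1 ≤ (∑ i, g i) * (ν / ∑ k, g k) :=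
          mul_le_mul_of_nonneg_left (min_le_left _ _) h.le
      _ = ν := mul_div_cancel₀ ν h.ne'

lemma klDivVec_mul_min_div_sum_le (ht : ∀ i, 0 ≤ t i) (hg : ∀ i, 0 < g i) {ν : ℝ}
    (hν : 0 < ν) (hsum : ∑ i, t i ≤ ν) :
    klDivVec (fun i => g i * min (ν / ∑ k, g k) 1) g ≤ klDivVec t g := by
  cases isEmpty_or_nonempty ι
  · simp [klDivVec]
  set s := ∑ k, g k
  have hs : 0 < s := sum_pos (fun i _ => hg i) univ_nonempty
  set α := min (ν / s) 1
  have hα : 0 < α := lt_min (div_pos hν hs) one_pos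
  have hcorr : 0 ≤ (∑ i, t i - α * s) * log α := by
    rcases le_total 1 (ν / s) with h | h
    · rw [show α = 1 from min_eq_right h, log_one, mul_zero]
    · rw [show α = ν / s from min_eq_left h, div_mul_cancel₀ ν hs.ne']
      exact mul_nonneg_of_nonpos_of_nonpos (by linarith) (log_nonpos (by positivity) h)
  rw [klDivVec_mul_const fun i => (hg i).ne']
  linarith [klDivVec_ge_tangent ht hg hα]

end Column

theorem stmt_2 {n m : ℕ} (γ : Matrix (Fin n) (Fin m) ℝ) (ν : Fin m → ℝ)
    (hγ : ∀ i j, 0 < γ i j) (hν : ∀ j, 0 < ν j) :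
    let C₂ : Set (Matrix (Fin n) (Fin m) ℝ) :=
      {T | (∀ i j, 0 ≤ T i j) ∧ ∀ j, ∑ i, T i j ≤ ν j}
    let P : Matrix (Fin n) (Fin m) ℝ :=
      fun i j => γ i j * min (ν j / ∑ k, γ k j) 1
    P ∈ C₂ ∧ ∀ T ∈ C₂, klDiv P γ ≤ klDiv T γ := by
  intro C₂ P
  have hcol : ∀ j, 0 ≤ ∑ k, γ k j := fun j => sum_nonneg fun k _ => (hγ k j).le
  refine ⟨⟨fun i j => ?_, fun j => ?_⟩, fun T hT => ?_⟩
  · exact mul_nonneg (hγ i j).le (le_min (div_nonneg (hν j).le (hcol j)) zero_le_one)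
  · exact sum_mul_min_div_sum_le (fun i => (hγ i j).le) (hν j).le
  · rw [klDiv_eq_sum_klDivVec, klDiv_eq_sum_klDivVec]
    exact sum_le_sum fun j _ =>
      klDivVec_mul_min_div_sum_le (fun i => hT.1 i j) (fun i => hγ i j) (hν j) (hT.2 j)
end

section
/- Suppose ℓ(a, c) = d₁(a) + d₂(c) − h₁(a)h₂(c) for all real a, c. Let C^s ∈ ℝ^{n×n}, C^t ∈ ℝ^{m×m}, T ∈ ℝ^{n×m}, and let μ = T1, ν = Tᵀ1. Then the matrix L with entries L_{i i'} = Σ_j Σ_{j'} ℓ(C^s_{ij}, C^t_{i'j'}) T_{jj'} satisfies L = d₁(C^s) (T1) 1ᵀ + 1 (Tᵀ1)ᵀ d₂(C^t)ᵀ − h₁(C^s) T h₂(C^t)ᵀ, where d₁, d₂, h₁, h₂ are applied entrywise. -/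
open Finset

theorem stmt_10 {n m : ℕ} (ℓ : ℝ → ℝ → ℝ) (d₁ h₁ d₂ h₂ : ℝ → ℝ)
    (hdecomp : ∀ a c : ℝ, ℓ a c = d₁ a + d₂ c - h₁ a * h₂ c)
    (Cs : Matrix (Fin n) (Fin n) ℝ) (Ct : Matrix (Fin m) (Fin m) ℝ)
    (T : Matrix (Fin n) (Fin m) ℝ) :
    ∀ i i', (∑ j, ∑ j', ℓ (Cs i j) (Ct i' j') * T j j') =
      (∑ j, d₁ (Cs i j) * ∑ j', T j j') +
      (∑ j', (∑ j, T j j') * d₂ (Ct i' j')) -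
      ∑ j, ∑ j', h₁ (Cs i j) * T j j' * h₂ (Ct i' j') := by
  intro i i'
  have key : ∀ j j', ℓ (Cs i j) (Ct i' j') * T j j' =
      d₁ (Cs i j) * T j j' + T j j' * d₂ (Ct i' j')
        - h₁ (Cs i j) * T j j' * h₂ (Ct i' j') := fun j j' => by rw [hdecomp]; ring
  simp only [key, Finset.sum_sub_distrib, Finset.sum_add_distrib]
  congr 1
  congr 1
  · simp [Finset.mul_sum]
  · rw [Finset.sum_comm]
    simp [Finset.sum_mul]
end
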